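/- arXiv:1702.07695 — 3 statements merged into one kernel-verified Lean document; each statement's English description precedes it below -/
import Mathlib

section
/- Let a ≥ 1 be a natural number and let x, y : Fin a → ℝ satisfy x i ≥ 3/2 and y i ≥ 1/2 for all i. Then the sum, over all subsets S of Fin a of odd cardinality, of the products (∏_{i ∈ S} y i) · (∏_{i ∉ S} x i) is at least (2^a − 1)/2. -/
open Finset

lemma aux_prod_one_le {ι : Type*} (s : Finset ι) (f : ι → ℝ)
    (hf : ∀ i ∈ s, 1 ≤ f i) :
    ∏ i ∈ s, f i + ((2 : ℝ) ^ s.card - 1) ≤ ∏ i ∈ s, (f i + 1) := by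
  induction s using Finset.cons_induction with
  | empty => simp
  | cons i s hi ih =>
    rw [Finset.prod_cons, Finset.prod_cons, Finset.card_cons]
    have h1 : (1 : ℝ) ≤ f i := hf i (Finset.mem_cons_self i s)
    have hp : (1 : ℝ) ≤ ∏ j ∈ s, f j := by
      have h := Finset.prod_le_prod (f := fun _ : ι => (1 : ℝ)) (g := f)
        (fun j _ => zero_le_one) (fun j hj => hf j (Finset.mem_cons_of_mem hj))
      simpa using h
    have ih' := ih (fun j hj => hf j (Finset.mem_cons_of_mem hj))
    have hpow : (1 : ℝ) ≤ (2 : ℝ) ^ s.card := one_le_pow₀ (by norm_num)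
    have h2 : (2 : ℝ) ^ (s.card + 1) = 2 * 2 ^ s.card := by ring
    nlinarith [ih', hpow, hp, h1]

/-- Lower bound `M^odd ≥ (2^a - 1)/2`: the sum over all subsets `S` of `Fin a`
of odd cardinality of `(∏ i ∈ S, y i) * (∏ i ∉ S, x i)` is at least `(2^a - 1)/2`,
provided `x i ≥ 3/2` and `y i ≥ 1/2` for all `i`. -/
theorem stmt_0 (a : ℕ) (ha : 1 ≤ a) (x y : Fin a → ℝ)
    (hx : ∀ i, (3 : ℝ) / 2 ≤ x i) (hy : ∀ i, (1 : ℝ) / 2 ≤ y i) :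
    ((2 : ℝ) ^ a - 1) / 2 ≤
      ∑ S ∈ Finset.univ.filter (fun S : Finset (Fin a) => Odd S.card),
        (∏ i ∈ S, y i) * ∏ i ∈ Sᶜ, x i := by
  classical
  set w : Finset (Fin a) → ℝ := fun S => (∏ i ∈ S, y i) * ∏ i ∈ Sᶜ, x i with hw
  have hP : ∏ i, (y i + x i) = ∑ S : Finset (Fin a), w S := by
    rw [Finset.prod_add, Finset.powerset_univ]
    refine Finset.sum_congr rfl fun S _ => ?_
    rw [hw]
    simp [Finset.compl_eq_univ_sdiff]
  have hQ : ∏ i, (x i - y i) = ∑ S : Finset (Fin a), (-1 : ℝ) ^ S.card * w S := by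
    have h1 : ∏ i, (x i - y i) = ∏ i, ((fun j => -y j) i + x i) := by
      refine Finset.prod_congr rfl fun i _ => ?_
      ring
    rw [h1, Finset.prod_add, Finset.powerset_univ]
    refine Finset.sum_congr rfl fun S _ => ?_
    rw [hw]
    have hneg : ∏ i ∈ S, -y i = (-1 : ℝ) ^ S.card * ∏ i ∈ S, y i := by
      calc ∏ i ∈ S, -y i = ∏ i ∈ S, ((-1 : ℝ) * y i) := by
            refine Finset.prod_congr rfl fun i _ => by ring
        _ = (∏ _i ∈ S, (-1 : ℝ)) * ∏ i ∈ S, y i := Finset.prod_mul_distrib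
        _ = (-1 : ℝ) ^ S.card * ∏ i ∈ S, y i := by rw [Finset.prod_const]
    simp only [Finset.compl_eq_univ_sdiff, hneg]
    ring
  have hsplit : ∑ S : Finset (Fin a), w S
      = ∑ S ∈ Finset.univ.filter (fun S : Finset (Fin a) => Odd S.card), w S
        + ∑ S ∈ Finset.univ.filter (fun S : Finset (Fin a) => ¬ Odd S.card), w S :=
    (Finset.sum_filter_add_sum_filter_not _ _ _).symm
  have hsplitQ : ∑ S : Finset (Fin a), (-1 : ℝ) ^ S.card * w S
      = - ∑ S ∈ Finset.univ.filter (fun S : Finset (Fin a) => Odd S.card), w S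
        + ∑ S ∈ Finset.univ.filter (fun S : Finset (Fin a) => ¬ Odd S.card), w S := by
    rw [← Finset.sum_filter_add_sum_filter_not Finset.univ
      (fun S : Finset (Fin a) => Odd S.card) (fun S => (-1 : ℝ) ^ S.card * w S)]
    congr 1
    · rw [← Finset.sum_neg_distrib]
      refine Finset.sum_congr rfl fun S hS => ?_
      have : Odd S.card := (Finset.mem_filter.mp hS).2
      rw [this.neg_one_pow]; ring
    · refine Finset.sum_congr rfl fun S hS => ?_
      have : ¬ Odd S.card := (Finset.mem_filter.mp hS).2
      rw [(Nat.not_odd_iff_even.mp this).neg_one_pow]; ring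
  -- the inequality P - Q ≥ 2^a - 1
  have hkey : ∏ i, (x i - y i) + ((2 : ℝ) ^ a - 1) ≤ ∏ i, (y i + x i) := by
    have hf1 : ∀ i ∈ (Finset.univ : Finset (Fin a)), (1 : ℝ) ≤ x i + y i - 1 :=
      fun i _ => by have := hx i; have := hy i; linarith
    have h1 := aux_prod_one_le Finset.univ (fun i => x i + y i - 1) hf1
    rw [Finset.card_univ, Fintype.card_fin] at h1
    have hP' : ∏ i, (x i + y i - 1 + 1) = ∏ i, (y i + x i) := by
      refine Finset.prod_congr rfl fun i _ => by ring
    have hQ' : ∏ i, (x i - y i) ≤ ∏ i, (x i + y i - 1) := by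
      calc ∏ i, (x i - y i) ≤ |∏ i, (x i - y i)| := le_abs_self _
        _ = ∏ i, |x i - y i| := Finset.abs_prod _ _
        _ ≤ ∏ i, (x i + y i - 1) := by
            refine Finset.prod_le_prod (fun i _ => abs_nonneg _) (fun i _ => ?_)
            have := hx i; have := hy i
            rw [abs_le]
            constructor <;> linarith
    rw [hP'] at h1
    linarith
  rw [hP, hsplit] at hkey
  rw [hQ, hsplitQ] at hkey
  linarith
end

section
/- Let a be a natural number and let e, f : Fin a → ℝ satisfy e i ≥ 1 and f i ≥ 2 for all i. Then twice the sum, over all subsets S of Fin a of even cardinality, of the products (∏_{i ∈ S} f i) · (∏_{i ∉ S} e i) is at least 3^a + (−1)^a. -/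
open Finset

set_option maxHeartbeats 800000 in
lemma key_est : ∀ (a : ℕ) (e f : Fin a → ℝ), (∀ i, (1:ℝ) ≤ e i) → (∀ i, (2:ℝ) ≤ f i) →
    (3:ℝ)^a + (-1:ℝ)^a ≤ (∏ i, (e i + f i)) + ∏ i, (e i - f i) ∧
    (3:ℝ)^a - (-1:ℝ)^a ≤ (∏ i, (e i + f i)) - ∏ i, (e i - f i) := by
  intro a
  induction a with
  | zero => intro e f he hf; norm_num
  | succ n ih =>
    intro e f he hf
    obtain ⟨h1, h2⟩ := ih (fun i => e i.castSucc) (fun i => f i.castSucc)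
      (fun i => he _) (fun i => hf _)
    rw [Fin.prod_univ_castSucc (f := fun i => e i + f i),
        Fin.prod_univ_castSucc (f := fun i => e i - f i)]
    set P := ∏ i : Fin n, (e i.castSucc + f i.castSucc) with hP
    set Q := ∏ i : Fin n, (e i.castSucc - f i.castSucc) with hQ
    have hel := he (Fin.last n)
    have hfl := hf (Fin.last n)
    set x := e (Fin.last n) + f (Fin.last n) with hx
    set y := e (Fin.last n) - f (Fin.last n) with hy
    have hx3 : (3:ℝ) ≤ x := by rw [hx]; linarith
    have hy1 : y ≤ x - 4 := by rw [hy, hx]; linarith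
    have hy2 : -(x-2) ≤ y := by rw [hy, hx]; linarith
    have h3 : (1:ℝ) ≤ 3^n := one_le_pow₀ (by norm_num)
    have hpow : (3:ℝ)^(n+1) = 3 * 3^n := by ring
    have hpow2 : (-1:ℝ)^(n+1) = -(-1:ℝ)^n := by ring
    rw [hpow, hpow2]
    have hε : (-1:ℝ)^n = 1 ∨ (-1:ℝ)^n = -1 := by
      rcases Nat.even_or_odd n with h | h
      · exact Or.inl h.neg_one_pow
      · exact Or.inr h.neg_one_pow
    have hA : (0:ℝ) ≤ 3^n - (-1)^n := by rcases hε with h|h <;> rw [h] <;> linarith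
    have hB : (0:ℝ) ≤ 3^n + (-1)^n := by rcases hε with h|h <;> rw [h] <;> linarith
    have hPQ1 : (0:ℝ) ≤ P + Q - 3^n - (-1)^n := by linarith
    have hPQ2 : (0:ℝ) ≤ P - Q - 3^n + (-1)^n := by linarith
    constructor
    · show 3 * 3^n + -(-1:ℝ)^n ≤ P * x + Q * y
      rcases le_or_gt 0 Q with hq | hq
      · nlinarith [mul_nonneg hq (by linarith : (0:ℝ) ≤ y + (x-2)),
          mul_nonneg (by linarith : (0:ℝ) ≤ x - 1) hPQ2,
          mul_nonneg (by linarith : (0:ℝ) ≤ x - 3) hA]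
      · nlinarith [mul_nonneg (by linarith : (0:ℝ) ≤ -Q) (by linarith : (0:ℝ) ≤ (x-4) - y),
          mul_nonneg (by linarith : (0:ℝ) ≤ x - 2) hPQ1,
          mul_nonneg (by linarith : (0:ℝ) ≤ x - 3) hB]
    · show 3 * 3^n - -(-1:ℝ)^n ≤ P * x - Q * y
      rcases le_or_gt 0 Q with hq | hq
      · nlinarith [mul_nonneg hq (by linarith : (0:ℝ) ≤ (x-4) - y),
          mul_nonneg (by linarith : (0:ℝ) ≤ x - 2) hPQ2,
          mul_nonneg (by linarith : (0:ℝ) ≤ x - 3) hA]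
      · nlinarith [mul_nonneg (by linarith : (0:ℝ) ≤ -Q) (by linarith : (0:ℝ) ≤ y + (x-2)),
          mul_nonneg (by linarith : (0:ℝ) ≤ x - 1) hPQ1,
          mul_nonneg (by linarith : (0:ℝ) ≤ x - 3) hB]

lemma sum_even_eq (a : ℕ) (e f : Fin a → ℝ) :
    2 * ∑ S ∈ Finset.univ.filter (fun S : Finset (Fin a) => Even S.card),
        (∏ i ∈ S, f i) * ∏ i ∈ Sᶜ, e i
      = (∏ i, (e i + f i)) + ∏ i, (e i - f i) := by
  have hadd : ∏ i, (e i + f i)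
      = ∑ t : Finset (Fin a), (∏ i ∈ t, f i) * ∏ i ∈ tᶜ, e i := by
    calc ∏ i, (e i + f i) = ∏ i, (f i + e i) := by simp [add_comm]
      _ = ∑ t ∈ (univ : Finset (Fin a)).powerset, (∏ i ∈ t, f i) * ∏ i ∈ univ \ t, e i :=
          Finset.prod_add f e univ
      _ = ∑ t : Finset (Fin a), (∏ i ∈ t, f i) * ∏ i ∈ tᶜ, e i := by
          rw [powerset_univ]
          exact sum_congr rfl fun t _ => by rw [← compl_eq_univ_sdiff]
  have hsub : ∏ i, (e i - f i)
      = ∑ t : Finset (Fin a), (-1:ℝ)^t.card * ((∏ i ∈ t, f i) * ∏ i ∈ tᶜ, e i) := by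
    calc ∏ i, (e i - f i) = ∏ i, ((-f i) + e i) := by simp [sub_eq_add_neg, add_comm]
      _ = ∑ t ∈ (univ : Finset (Fin a)).powerset, (∏ i ∈ t, -f i) * ∏ i ∈ univ \ t, e i :=
          Finset.prod_add (fun i => -f i) e univ
      _ = ∑ t : Finset (Fin a), (-1:ℝ)^t.card * ((∏ i ∈ t, f i) * ∏ i ∈ tᶜ, e i) := by
          rw [powerset_univ]
          refine sum_congr rfl fun t _ => ?_
          rw [← compl_eq_univ_sdiff]
          have : ∏ i ∈ t, (-f i) = (-1:ℝ)^t.card * ∏ i ∈ t, f i := by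
            calc ∏ i ∈ t, (-f i) = ∏ i ∈ t, ((-1) * f i) := by simp
              _ = (∏ _i ∈ t, (-1:ℝ)) * ∏ i ∈ t, f i := prod_mul_distrib
              _ = (-1:ℝ)^t.card * ∏ i ∈ t, f i := by rw [prod_const]
          rw [this, mul_assoc]
  set g : Finset (Fin a) → ℝ := fun S => (∏ i ∈ S, f i) * ∏ i ∈ Sᶜ, e i with hg
  have hsplit := Finset.sum_filter_add_sum_filter_not (univ : Finset (Finset (Fin a)))
    (fun S => Even S.card) g
  have hsplit2 := Finset.sum_filter_add_sum_filter_not (univ : Finset (Finset (Fin a)))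
    (fun S => Even S.card) (fun S => (-1:ℝ)^S.card * g S)
  have heven : ∑ S ∈ univ.filter (fun S : Finset (Fin a) => Even S.card),
      (-1:ℝ)^S.card * g S = ∑ S ∈ univ.filter (fun S : Finset (Fin a) => Even S.card), g S := by
    refine sum_congr rfl fun S hS => ?_
    rw [(mem_filter.mp hS).2.neg_one_pow, one_mul]
  have hodd : ∑ S ∈ univ.filter (fun S : Finset (Fin a) => ¬ Even S.card),
      (-1:ℝ)^S.card * g S = -∑ S ∈ univ.filter (fun S : Finset (Fin a) => ¬ Even S.card), g S := by
    rw [← sum_neg_distrib]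
    refine sum_congr rfl fun S hS => ?_
    rw [(Nat.not_even_iff_odd.mp (mem_filter.mp hS).2).neg_one_pow]
    ring
  rw [hadd, hsub, ← hsplit, ← hsplit2, heven, hodd]
  ring

/-- Estimate from the inner-automorphism case: twice the sum over all subsets `S`
of `Fin a` of even cardinality of `(∏ i ∈ S, f i) * (∏ i ∉ S, e i)` is at least
`3^a + (-1)^a`, provided `e i ≥ 1` and `f i ≥ 2` for all `i`. -/
theorem stmt_2 (a : ℕ) (e f : Fin a → ℝ)
    (he : ∀ i, (1 : ℝ) ≤ e i) (hf : ∀ i, (2 : ℝ) ≤ f i) :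
    (3 : ℝ) ^ a + (-1 : ℝ) ^ a ≤
      2 * ∑ S ∈ Finset.univ.filter (fun S : Finset (Fin a) => Even S.card),
        (∏ i ∈ S, f i) * ∏ i ∈ Sᶜ, e i := by
  rw [sum_even_eq]
  exact (key_est a e f he hf).1
end

section
/- Let k ≥ 3 be a natural number and let n : Fin k → ℕ be monotone (nondecreasing) with n i ≥ 2 for all i. Define θ = 2 if the number of indices i with n i even is odd, and θ = 1 otherwise. Then θ · (n 0 − 1) · ∏_{i ≠ 0} n i ≤ 2k + 2 holds if and only if either k = 3 and (n 0, n 1, n 2) = (2,2,2), or k = 3 and (n 0, n 1, n 2) = (2,2,3), or k = 4 and (n 0, n 1, n 2, n 3) = (2,2,2,2). -/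
private lemma aux_pow (m : ℕ) (h : 4 ≤ m) : 2 * m + 4 < 2 ^ m := by
  induction m with
  | zero => omega
  | succ p ih =>
    rcases Nat.lt_or_ge p 4 with h' | h'
    · interval_cases p <;> omega
    · have h1 := ih h'
      have h2 : (2 : ℕ) ≤ 2 ^ p := by
        calc (2:ℕ) = 2^1 := rfl
        _ ≤ 2^p := Nat.pow_le_pow_right (by norm_num) (by omega)
      rw [pow_succ]
      omega

/-- Classification of solutions of `θ * (n 0 - 1) * ∏_{i ≠ 0} n i ≤ 2k + 2` for
monotone `n : Fin k → ℕ` with `n i ≥ 2` and `k ≥ 3`, where `θ = 2` if the number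
of indices `i` with `n i` even is odd, and `θ = 1` otherwise: the solutions are
exactly `(2,2,2)`, `(2,2,3)` (for `k = 3`) and `(2,2,2,2)` (for `k = 4`). -/
theorem stmt_6 (k : ℕ) (hk : 3 ≤ k) (n : Fin k → ℕ) (hmono : Monotone n)
    (hn : ∀ i, 2 ≤ n i) (θ : ℕ)
    (hθ : θ = if Odd (Finset.univ.filter (fun i : Fin k => Even (n i))).card
      then 2 else 1) :
    θ * (n ⟨0, by omega⟩ - 1) *
        ∏ i ∈ Finset.univ.erase (⟨0, by omega⟩ : Fin k), n i ≤ 2 * k + 2 ↔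
      (k = 3 ∧ ∀ i, n i = 2) ∨
      (k = 3 ∧ ∀ i : Fin k, n i = if (i : ℕ) ≤ 1 then 2 else 3) ∨
      (k = 4 ∧ ∀ i, n i = 2) := by
  have hθ1 : 1 ≤ θ := by rw [hθ]; split <;> norm_num
  rcases (show k = 3 ∨ k = 4 ∨ 5 ≤ k by omega) with rfl | rfl | hk5
  · -- k = 3
    rw [show (⟨0, by omega⟩ : Fin 3) = 0 from rfl]
    have hprod : ∏ i ∈ Finset.univ.erase (0 : Fin 3), n i
        = n 1 * n 2 := by
      have he : Finset.univ.erase (0 : Fin 3) = {1, 2} := by decide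
      rw [he, Finset.prod_insert (by decide), Finset.prod_singleton]
    have hcard : (Finset.univ.filter (fun i : Fin 3 => Even (n i))).card
        = (if Even (n 0) then 1 else 0) + (if Even (n 1) then 1 else 0)
          + (if Even (n 2) then 1 else 0) := by
      rw [Finset.card_filter, Fin.sum_univ_three]
    rw [hcard] at hθ
    have hR1 : (∀ i : Fin 3, n i = 2) ↔ (n 0 = 2 ∧ n 1 = 2 ∧ n 2 = 2) := by
      constructor
      · intro h; exact ⟨h 0, h 1, h 2⟩
      · rintro ⟨h0, h1, h2⟩ i; fin_cases i <;> assumption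
    have hR2 : (∀ i : Fin 3, n i = if (i : ℕ) ≤ 1 then 2 else 3) ↔
        (n 0 = 2 ∧ n 1 = 2 ∧ n 2 = 3) := by
      constructor
      · intro h; refine ⟨?_, ?_, ?_⟩
        · simpa using h 0
        · simpa using h 1
        · simpa using h 2
      · rintro ⟨h0, h1, h2⟩ i; fin_cases i <;> simp_all
    rw [hprod, hR1, hR2]
    have hab : n 0 ≤ n 1 := hmono (by decide : (0 : Fin 3) ≤ 1)
    have hbc : n 1 ≤ n 2 := hmono (by decide : (1 : Fin 3) ≤ 2)
    have ha2 : 2 ≤ n 0 := hn 0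
    generalize hA : n 0 = a at *
    generalize hB : n 1 = b at *
    generalize hC : n 2 = c at *
    clear hA hB hC hmono hn hR1 hR2 hprod hcard n
    constructor
    · intro h
      have h1θ : 1 ≤ θ * (a - 1) := Nat.mul_pos (by omega) (by omega)
      have hbc8 : b * c ≤ 8 := by
        calc b * c = 1 * (b * c) := by ring
        _ ≤ θ * (a - 1) * (b * c) := Nat.mul_le_mul_right _ h1θ
        _ ≤ 2 * 3 + 2 := h
      have hb2 : b = 2 := by
        by_contra hb'
        have : 9 ≤ b * c :=
          le_trans (by norm_num)
            (Nat.mul_le_mul (show 3 ≤ b by omega) (show 3 ≤ c by omega))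
        omega
      have haa : a = 2 := by omega
      subst hb2 haa
      have hc4 : c ≤ 4 := by
        have : 2 * c ≤ 8 := by
          calc 2 * c = 1 * (2 * c) := by ring
          _ ≤ θ * (2 - 1) * (2 * c) := Nat.mul_le_mul_right _ h1θ
          _ ≤ 2 * 3 + 2 := h
        omega
      have hc2 : 2 ≤ c := by omega
      interval_cases c <;>
        norm_num [Nat.even_iff, Nat.odd_iff, Nat.add_mod] at hθ <;> subst hθ <;>
        [tauto; tauto; omega]
    · rintro (⟨-, h0, h1, h2⟩ | ⟨-, h0, h1, h2⟩ | ⟨h, -⟩) <;>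
        [skip; skip; omega] <;> subst h0 <;> subst h1 <;> subst h2 <;>
        norm_num [Nat.even_iff, Nat.odd_iff, Nat.add_mod] at hθ <;> subst hθ <;> omega
  · -- k = 4
    rw [show (⟨0, by omega⟩ : Fin 4) = 0 from rfl]
    have hprod : ∏ i ∈ Finset.univ.erase (0 : Fin 4), n i
        = n 1 * (n 2 * n 3) := by
      have he : Finset.univ.erase (0 : Fin 4) = {1, 2, 3} := by decide
      rw [he, Finset.prod_insert (by decide), Finset.prod_insert (by decide),
        Finset.prod_singleton]
    have hcard : (Finset.univ.filter (fun i : Fin 4 => Even (n i))).card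
        = (if Even (n 0) then 1 else 0) + (if Even (n 1) then 1 else 0)
          + (if Even (n 2) then 1 else 0) + (if Even (n 3) then 1 else 0) := by
      rw [Finset.card_filter, Fin.sum_univ_four]
    rw [hcard] at hθ
    have hR1 : (∀ i : Fin 4, n i = 2) ↔ (n 0 = 2 ∧ n 1 = 2 ∧ n 2 = 2 ∧ n 3 = 2) := by
      constructor
      · intro h; exact ⟨h 0, h 1, h 2, h 3⟩
      · rintro ⟨h0, h1, h2, h3⟩ i; fin_cases i <;> assumption
    have hR2 : (∀ i : Fin 4, n i = if (i : ℕ) ≤ 1 then 2 else 3) ↔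
        (n 0 = 2 ∧ n 1 = 2 ∧ n 2 = 3 ∧ n 3 = 3) := by
      constructor
      · intro h
        exact ⟨by simpa using h 0, by simpa using h 1, by simpa using h 2,
          by simpa using h 3⟩
      · rintro ⟨h0, h1, h2, h3⟩ i; fin_cases i <;> simp_all
    rw [hprod, hR1, hR2]
    have hab : n 0 ≤ n 1 := hmono (by decide : (0 : Fin 4) ≤ 1)
    have hbc : n 1 ≤ n 2 := hmono (by decide : (1 : Fin 4) ≤ 2)
    have hcd : n 2 ≤ n 3 := hmono (by decide : (2 : Fin 4) ≤ 3)
    have ha2 : 2 ≤ n 0 := hn 0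
    generalize hA : n 0 = a at *
    generalize hB : n 1 = b at *
    generalize hC : n 2 = c at *
    generalize hD : n 3 = d at *
    clear hA hB hC hD hmono hn hR1 hR2 hprod hcard n
    constructor
    · intro h
      have h1θ : 1 ≤ θ * (a - 1) := Nat.mul_pos (by omega) (by omega)
      have hbcd : b * (c * d) ≤ 10 := by
        calc b * (c * d) = 1 * (b * (c * d)) := by ring
        _ ≤ θ * (a - 1) * (b * (c * d)) := Nat.mul_le_mul_right _ h1θ
        _ ≤ 2 * 4 + 2 := h
      have hd2 : d = 2 := by
        by_contra hd'
        have : 12 ≤ b * (c * d) :=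
          le_trans (by norm_num)
            (Nat.mul_le_mul (show 2 ≤ b by omega)
              (Nat.mul_le_mul (show 2 ≤ c by omega) (show 3 ≤ d by omega)))
        omega
      have hc2 : c = 2 := by omega
      have hb2 : b = 2 := by omega
      have ha' : a = 2 := by omega
      subst hd2 hc2 hb2 ha'
      norm_num
    · rintro (⟨h, -⟩ | ⟨h, -⟩ | ⟨-, h0, h1, h2, h3⟩)
      · omega
      · omega
      · subst h0; subst h1; subst h2; subst h3
        norm_num [Nat.even_iff, Nat.odd_iff, Nat.add_mod] at hθ
        subst hθ; omega
  · -- k ≥ 5 : both sides false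
    constructor
    · intro h
      exfalso
      have hP : 2 ^ (k - 1) ≤ ∏ i ∈ Finset.univ.erase ((⟨0, by omega⟩ : Fin k)), n i := by
        calc 2 ^ (k - 1)
            = ∏ _i ∈ Finset.univ.erase ((⟨0, by omega⟩ : Fin k)), 2 := by
              rw [Finset.prod_const, Finset.card_erase_of_mem (Finset.mem_univ _),
                Finset.card_univ, Fintype.card_fin]
        _ ≤ ∏ i ∈ Finset.univ.erase ((⟨0, by omega⟩ : Fin k)), n i :=
              Finset.prod_le_prod' (fun i _ => hn i)
      have h1θ : 0 < θ * (n ⟨0, by omega⟩ - 1) :=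
        Nat.mul_pos (by omega) (by have := hn ⟨0, by omega⟩; omega)
      have hPle : 2 ^ (k - 1) ≤ 2 * k + 2 := by
        calc 2 ^ (k - 1) ≤ ∏ i ∈ Finset.univ.erase ((⟨0, by omega⟩ : Fin k)), n i := hP
        _ ≤ θ * (n ⟨0, by omega⟩ - 1) *
            ∏ i ∈ Finset.univ.erase ((⟨0, by omega⟩ : Fin k)), n i :=
              Nat.le_mul_of_pos_left _ h1θ
        _ ≤ 2 * k + 2 := h
      have := aux_pow (k - 1) (by omega)
      have : 2 * (k - 1) + 4 < 2 * k + 2 := lt_of_lt_of_le this hPle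
      omega
    · rintro (⟨h, -⟩ | ⟨h, -⟩ | ⟨h, -⟩) <;> omega
end
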